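/- Let G be a finite simple graph on a vertex set V with n = |V| ≥ 2, α : V → V → ℝ antisymmetric, and v₁ ≠ v₂ in V. Let V' = V ∖ {v₂}, let L : ℂ^{V'} → ℂ^V be the lift defined by (Lψ)(v) = ψ(v) for v ≠ v₂ and (Lψ)(v₂) = ψ(v₁), and let Δ̃ be the self-adjoint positive semidefinite operator on ℂ^{V'} (with the standard inner product Σ_{v∈V'} ψ(v)·conj(χ(v))) determined by the quadratic form ⟨Δ̃ψ, ψ⟩ = q(Lψ), where q(φ) = (1/2)·Σ_{v,u ∈ V, u adjacent to v} |φ(v) − exp(i·α v u)·φ(u)|². Let μ_1 ≤ … ≤ μ_{n−1} be the eigenvalues of Δ̃, and let λ_1 ≤ … ≤ λ_n be the eigenvalues of the magnetic combinatorial Laplacian of (G, α). Set r = min(deg_G v₁, deg_G v₂), and s = 1 if v₁ is adjacent to v₂ and α v₁ v₂ ≡ 0 (mod 2π), s = 0 otherwise. Then λ_k ≤ μ_k for all 1 ≤ k ≤ n − 1, and μ_k ≤ λ_{k + r + 1 − s} for all 1 ≤ k ≤ n − (r + 1 − s). -/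

import Mathlib

/-- The magnetic weighted Laplacian `Δ(w,m,α)` as a matrix acting on `ℂ^V`:
`(Δφ)(v) = (1/m v) · Σ_u w v u · (φ(v) − exp(i·α v u)·φ(u))`. -/
noncomputable def magLap {V : Type} [Fintype V] [DecidableEq V]
    (w : V → V → ℝ) (m : V → ℝ) (α : V → V → ℝ) : Matrix V V ℂ :=
  fun v u => (if v = u then (((∑ u', w v u') / m v : ℝ) : ℂ) else 0)
    - ((w v u / m v : ℝ) : ℂ) * Complex.exp (Complex.I * (α v u : ℝ))

open scoped Classical

/-- The magnetic combinatorial Laplacian of a simple graph: vertex weight `1`,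
edge weight the adjacency indicator. -/
noncomputable def combLap {V : Type} [Fintype V] [DecidableEq V]
    (G : SimpleGraph V) (α : V → V → ℝ) : Matrix V V ℂ :=
  magLap (fun v u => if G.Adj v u then 1 else 0) (fun _ => 1) α

/-- The eigenvalues (with multiplicity, nondecreasing) of a matrix with real
spectrum: real parts of the roots of the characteristic polynomial, sorted;
`lamk A k` is the `(k+1)`-st smallest (0-based index). -/
noncomputable def lamk {V : Type} [Fintype V] [DecidableEq V] (A : Matrix V V ℂ) (k : ℕ) : ℝ :=
  ((A.charpoly.roots.map Complex.re).sort (· ≤ ·)).getD k 0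

/-- The quadratic form of the magnetic combinatorial Laplacian:
`q(φ) = (1/2)·Σ_{v,u adjacent} |φ(v) − exp(i·α v u)·φ(u)|²`. -/
noncomputable def combForm {V : Type} [Fintype V]
    (G : SimpleGraph V) (α : V → V → ℝ) (φ : V → ℂ) : ℝ :=
  (1 / 2) * ∑ v : V, ∑ u : V,
    if G.Adj v u then Complex.normSq (φ v - Complex.exp (Complex.I * (α v u : ℝ)) * φ u) else 0

/-- The lift `L : ℂ^{V ∖ {v₂}} → ℂ^V`, `(Lψ)(v) = ψ(v)` for `v ≠ v₂` and
`(Lψ)(v₂) = ψ(v₁)`. -/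
noncomputable def liftFun {V : Type} [DecidableEq V] {v₁ v₂ : V} (hv : v₁ ≠ v₂)
    (ψ : {v : V // v ≠ v₂} → ℂ) : V → ℂ :=
  fun v => if h : v = v₂ then ψ ⟨v₁, hv⟩ else ψ ⟨v, h⟩

/-!
Both inequalities are instances of one Courant–Fischer comparison: if `f` maps a subspace `K` of
codimension at most `d` into the space of `Δ̃` without decreasing norms and without increasing the
quadratic form, then `μ_k ≤ λ_{k+d}` (and symmetrically with the roles exchanged). For
`λ_k ≤ μ_k` take `f = L` on the whole space, since `⟨Δ̃ψ, ψ⟩ = q(Lψ)` and `‖Lψ‖ ≥ ‖ψ‖`. For the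
upper bound restrict to `φ(v₁) = φ(v₂) = 0`, on which `L` inverts the restriction map exactly;
this costs codimension `2 ≤ r + 1 - s` unless `r + 1 - s = 1`. In that case one of the two
vertices is isolated, or a leaf attached to the other by an edge of trivial phase, and a single
condition `φ(a) = 0` at that vertex `a` suffices, because overwriting `φ(a)` by the value at its
neighbour only kills edge terms of `q`.
-/

open Module RCLike Matrix WithLp
open scoped InnerProductSpace ComplexOrder ComplexConjugate

namespace LinearMap.IsSymmetric

variable {𝕜 E F : Type*} [RCLike 𝕜] [NormedAddCommGroup E] [InnerProductSpace 𝕜 E]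
  [FiniteDimensional 𝕜 E] {T : E →ₗ[𝕜] E} (hT : T.IsSymmetric) {n : ℕ} (hn : finrank 𝕜 E = n)

theorem re_inner_apply_self_eq_sum (x : E) :
    re ⟪T x, x⟫_𝕜 = ∑ i, hT.eigenvalues hn i * ‖⟪hT.eigenvectorBasis hn i, x⟫_𝕜‖ ^ 2 := by
  set b := hT.eigenvectorBasis hn
  have hcoord (i : Fin n) : ⟪T x, b i⟫_𝕜 = hT.eigenvalues hn i * ⟪x, b i⟫_𝕜 := by
    rw [hT, hT.apply_eigenvectorBasis, inner_smul_right]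
  rw [← b.sum_inner_mul_inner, map_sum]
  refine Finset.sum_congr rfl fun i _ => ?_
  rw [hcoord, mul_assoc, ← inner_conj_symm, RCLike.conj_mul, ← RCLike.ofReal_pow,
    ← RCLike.ofReal_mul, RCLike.ofReal_re]

theorem re_inner_apply_self_le {i : Fin n} {x : E}
    (hx : ∀ j < i, ⟪hT.eigenvectorBasis hn j, x⟫_𝕜 = 0) :
    re ⟪T x, x⟫_𝕜 ≤ hT.eigenvalues hn i * ‖x‖ ^ 2 := by
  rw [hT.re_inner_apply_self_eq_sum hn, ← (hT.eigenvectorBasis hn).sum_sq_norm_inner_right,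
    Finset.mul_sum]
  refine Finset.sum_le_sum fun j _ => ?_
  rcases lt_or_ge j i with hji | hij
  · simp [hx j hji]
  · exact mul_le_mul_of_nonneg_right (hT.eigenvalues_antitone hn hij) (by positivity)

theorem le_re_inner_apply_self {i : Fin n} {x : E}
    (hx : ∀ j, i < j → ⟪hT.eigenvectorBasis hn j, x⟫_𝕜 = 0) :
    hT.eigenvalues hn i * ‖x‖ ^ 2 ≤ re ⟪T x, x⟫_𝕜 := by
  rw [hT.re_inner_apply_self_eq_sum hn, ← (hT.eigenvectorBasis hn).sum_sq_norm_inner_right,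
    Finset.mul_sum]
  refine Finset.sum_le_sum fun j _ => ?_
  rcases lt_or_ge i j with hij | hji
  · simp [hx j hij]
  · exact mul_le_mul_of_nonneg_right (hT.eigenvalues_antitone hn hji) (by positivity)

variable [NormedAddCommGroup F] [InnerProductSpace 𝕜 F] [FiniteDimensional 𝕜 F]
  {S : F →ₗ[𝕜] F} (hS : S.IsSymmetric) {m : ℕ} (hm : finrank 𝕜 F = m)

/-- Mathlib sorts `eigenvalues` decreasingly. `i + (m - 1 - j)` counts the conditions `x ⊥ b a`
for `a < i` and `f x ⊥ c a` for `a > j`, where `b`, `c` are the eigenbases of `T`, `S`. -/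
theorem eigenvalues_le_of_re_inner_le (hTpos : T.IsPositive) (f : E →ₗ[𝕜] F)
    (K : Submodule 𝕜 E) (hnorm : ∀ x ∈ K, ‖x‖ ≤ ‖f x‖)
    (hform : ∀ x ∈ K, re ⟪S (f x), f x⟫_𝕜 ≤ re ⟪T x, x⟫_𝕜) (i : Fin n) (j : Fin m)
    (hdim : i + (m - 1 - j) < finrank 𝕜 K) :
    hS.eigenvalues hm j ≤ hT.eigenvalues hn i := by
  set b := hT.eigenvectorBasis hn
  set c := hS.eigenvectorBasis hm
  let constraints : E →ₗ[𝕜] (Finset.Iio i → 𝕜) × (Finset.Ioi j → 𝕜) :=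
    (LinearMap.pi fun a : Finset.Iio i => innerₛₗ 𝕜 (b a)).prod
      (LinearMap.pi fun a : Finset.Ioi j => innerₛₗ 𝕜 (c a) ∘ₗ f)
  have hker : LinearMap.ker (constraints ∘ₗ K.subtype) ≠ ⊥ :=
    LinearMap.ker_ne_bot_of_finrank_lt <| by
      rwa [finrank_prod, finrank_fintype_fun_eq_card, finrank_fintype_fun_eq_card,
        Fintype.card_coe, Fintype.card_coe, Fin.card_Iio, Fin.card_Ioi]
  obtain ⟨⟨x, hxK⟩, hx, hx0⟩ := (Submodule.ne_bot_iff _).mp hker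
  have hxT (a) (ha : a < i) : ⟪b a, x⟫_𝕜 = 0 :=
    congr_fun (congr_arg Prod.fst hx) ⟨a, Finset.mem_Iio.mpr ha⟩
  have hxS (a) (ha : j < a) : ⟪c a, f x⟫_𝕜 = 0 :=
    congr_fun (congr_arg Prod.snd hx) ⟨a, Finset.mem_Ioi.mpr ha⟩
  have hxpos : 0 < ‖x‖ ^ 2 := by
    have : x ≠ 0 := fun h => hx0 (Subtype.ext h)
    positivity
  have hupper := hT.re_inner_apply_self_le hn hxT
  have heig_nonneg : 0 ≤ hT.eigenvalues hn i :=
    nonneg_of_mul_nonneg_left ((hTpos.re_inner_nonneg_left x).trans hupper) hxpos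
  have hfx : ‖x‖ ^ 2 ≤ ‖f x‖ ^ 2 := by gcongr; exact hnorm x hxK
  refine le_of_mul_le_mul_right ?_ (hxpos.trans_le hfx)
  calc hS.eigenvalues hm j * ‖f x‖ ^ 2 ≤ re ⟪S (f x), f x⟫_𝕜 := hS.le_re_inner_apply_self hm hxS
    _ ≤ re ⟪T x, x⟫_𝕜 := hform x hxK
    _ ≤ hT.eigenvalues hn i * ‖x‖ ^ 2 := hupper
    _ ≤ hT.eigenvalues hn i * ‖f x‖ ^ 2 := by gcongr

end LinearMap.IsSymmetric

theorem LinearMap.finrank_le_finrank_ker_add {K V W : Type*} [DivisionRing K] [AddCommGroup V]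
    [Module K V] [AddCommGroup W] [Module K W] [FiniteDimensional K V] [FiniteDimensional K W]
    (f : V →ₗ[K] W) : finrank K V ≤ finrank K (LinearMap.ker f) + finrank K W := by
  rw [← f.finrank_range_add_finrank_ker, add_comm]
  exact Nat.add_le_add_left (Submodule.finrank_le _) _

theorem Fintype.sum_subtype_ne_add {ι M : Type*} [Fintype ι] [DecidableEq ι] [AddCommMonoid M]
    (f : ι → M) (a : ι) : ∑ i : {i // i ≠ a}, f i + f a = ∑ i, f i := by
  rw [← Finset.sum_subtype (Finset.univ.erase a) (by simp),
    Finset.sum_erase_add _ _ (Finset.mem_univ a)]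

namespace Matrix

variable {m n : Type} [Fintype m] [DecidableEq m] [Fintype n] [DecidableEq n]

theorem IsHermitian.lamk_eq_eigenvalues₀_rev {A : Matrix n n ℂ} (hA : A.IsHermitian) {k : ℕ}
    (hk : k < Fintype.card n) : lamk A k = hA.eigenvalues₀ (Fin.rev ⟨k, hk⟩) := by
  have hsort : (A.charpoly.roots.map Complex.re).sort (· ≤ ·)
      = (List.ofFn hA.eigenvalues₀).reverse := by
    rw [← hA.sort_roots_charpoly_eq_eigenvalues₀]
    refine List.Perm.eq_of_pairwise' (Multiset.pairwise_sort _ _)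
      (List.pairwise_reverse.mpr (Multiset.pairwise_sort _ _)) (Multiset.coe_eq_coe.mp ?_)
    rw [Multiset.coe_reverse, Multiset.sort_eq, Multiset.sort_eq]
    rfl
  rw [lamk, hsort, List.getD_eq_getElem _ _ (by simpa using hk), List.getElem_reverse,
    List.getElem_ofFn]
  congr 1
  ext
  simp only [Fin.val_rev, List.length_ofFn]
  omega

theorem IsHermitian.lamk_le_lamk {A : Matrix n n ℂ} (hA : A.IsHermitian) {i j : ℕ} (hij : i ≤ j)
    (hj : j < Fintype.card n) : lamk A i ≤ lamk A j := by
  rw [hA.lamk_eq_eigenvalues₀_rev (hij.trans_lt hj), hA.lamk_eq_eigenvalues₀_rev hj]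
  exact hA.eigenvalues₀_antitone (Fin.rev_le_rev.mpr hij)

theorem re_inner_toEuclideanLin_self (A : Matrix n n ℂ) (x : EuclideanSpace ℂ n) :
    re ⟪toEuclideanLin A x, x⟫_ℂ = (star (ofLp x) ⬝ᵥ (A *ᵥ ofLp x)).re := by
  rw [inner_re_symm, EuclideanSpace.inner_eq_star_dotProduct, dotProduct_comm]
  rfl

theorem posSemidef_of_star_dotProduct_mulVec_nonneg {A : Matrix n n ℂ}
    (h : ∀ x, 0 ≤ star x ⬝ᵥ (A *ᵥ x)) : A.PosSemidef := by
  rw [← isPositive_toEuclideanLin_iff, LinearMap.isPositive_iff_complex]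
  intro x
  have hx : ⟪toEuclideanLin A x, x⟫_ℂ = star (star (ofLp x) ⬝ᵥ (A *ᵥ ofLp x)) := by
    rw [EuclideanSpace.inner_eq_star_dotProduct, star_dotProduct, star_star, dotProduct_comm]
    rfl
  obtain ⟨hre, him⟩ := Complex.nonneg_iff.mp (h (ofLp x))
  rw [hx]
  exact ⟨Complex.ext (by simp) (by simp [← him]), by simpa using hre⟩

theorem lamk_le_lamk_add {A : Matrix n n ℂ} {B : Matrix m m ℂ} (hA : A.PosSemidef)
    (hB : B.IsHermitian) (f : (n → ℂ) →ₗ[ℂ] (m → ℂ)) (K : Submodule ℂ (n → ℂ)) {d : ℕ}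
    (hK : Fintype.card n ≤ finrank ℂ K + d)
    (hnorm : ∀ x ∈ K, ∑ a, ‖x a‖ ^ 2 ≤ ∑ b, ‖f x b‖ ^ 2)
    (hform : ∀ x ∈ K, (star (f x) ⬝ᵥ (B *ᵥ f x)).re ≤ (star x ⬝ᵥ (A *ᵥ x)).re)
    {k : ℕ} (hkm : k < Fintype.card m) (hkn : k + d < Fintype.card n) :
    lamk B k ≤ lamk A (k + d) := by
  let eₙ := WithLp.linearEquiv 2 ℂ (n → ℂ)
  let eₘ := WithLp.linearEquiv 2 ℂ (m → ℂ)
  have hK' : finrank ℂ (K.comap eₙ.toLinearMap) = finrank ℂ K := by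
    rw [Submodule.comap_equiv_eq_map_symm, LinearEquiv.finrank_map_eq]
  rw [hB.lamk_eq_eigenvalues₀_rev hkm, hA.isHermitian.lamk_eq_eigenvalues₀_rev hkn]
  refine LinearMap.IsSymmetric.eigenvalues_le_of_re_inner_le _ _ _ _
    (isPositive_toEuclideanLin_iff.mpr hA) (eₘ.symm.toLinearMap ∘ₗ f ∘ₗ eₙ.toLinearMap)
    (K.comap eₙ.toLinearMap) (fun x hx => ?_) (fun x hx => ?_) _ _ ?_
  · rw [← sq_le_sq₀ (norm_nonneg _) (norm_nonneg _), EuclideanSpace.norm_sq_eq,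
      EuclideanSpace.norm_sq_eq]
    exact hnorm _ hx
  · rw [re_inner_toEuclideanLin_self, re_inner_toEuclideanLin_self]
    exact hform _ hx
  · rw [hK']
    simp only [Fin.val_rev]
    omega

end Matrix

theorem Complex.conj_mul_sub_add_conj_mul_sub {e : ℂ} (he : conj e * e = 1) (a b : ℂ) :
    conj a * (a - e * b) + conj b * (b - conj e * a) = Complex.normSq (a - e * b) := by
  rw [Complex.normSq_eq_conj_mul_self, map_sub, map_mul]
  linear_combination (-(conj b * b)) * he

theorem cexp_I_mul_two_pi_int (n : ℤ) :
    Complex.exp (Complex.I * ((2 * Real.pi * n : ℝ) : ℂ)) = 1 := by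
  push_cast
  rw [show Complex.I * (2 * Real.pi * n) = n * (2 * Real.pi * Complex.I) by ring]
  exact Complex.exp_int_mul_two_pi_mul_I n

theorem conj_cexp_I_mul_of_antisymm {V : Type*} {α : V → V → ℝ} (hα : ∀ v u, α v u = - α u v)
    (v u : V) :
    conj (Complex.exp (Complex.I * (α v u : ℝ))) = Complex.exp (Complex.I * (α u v : ℝ)) := by
  rw [← Complex.exp_conj, map_mul, Complex.conj_I, Complex.conj_ofReal, hα u v]
  push_cast
  ring_nf

section Graph

variable {V : Type} [Fintype V] (G : SimpleGraph V) {α : V → V → ℝ}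

/-- This includes the case that `a` is isolated. -/
def IsFluxFreeLeaf (α : V → V → ℝ) (a b : V) : Prop :=
  ∀ u, G.Adj a u → u = b ∧ Complex.exp (Complex.I * (α a u : ℝ)) = 1

theorem SimpleGraph.eq_of_adj_of_degree_le_one {a b u : V} (hdeg : G.degree a ≤ 1)
    (hb : G.Adj a b) (hu : G.Adj a u) : u = b :=
  Finset.card_le_one.mp hdeg u (by simpa) b (by simpa)

theorem isFluxFreeLeaf_of_degree_le_one {a b : V} (hdeg : G.degree a ≤ 1)
    (hab : 0 < G.degree a → G.Adj a b ∧ Complex.exp (Complex.I * (α a b : ℝ)) = 1) :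
    IsFluxFreeLeaf G α a b := by
  intro u hu
  obtain ⟨hb, he⟩ := hab ((G.degree_pos_iff_exists_adj a).mpr ⟨u, hu⟩)
  obtain rfl := G.eq_of_adj_of_degree_le_one hdeg hb hu
  exact ⟨rfl, he⟩

theorem isFluxFreeLeaf_or_isFluxFreeLeaf {v₁ v₂ : V} (hα : ∀ v u, α v u = - α u v)
    (hd : min (G.degree v₁) (G.degree v₂) + 1
      - (if G.Adj v₁ v₂ ∧ ∃ n : ℤ, α v₁ v₂ = 2 * Real.pi * n then 1 else 0) ≤ 1) :
    IsFluxFreeLeaf G α v₁ v₂ ∨ IsFluxFreeLeaf G α v₂ v₁ := by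
  have hflux (hpos : 0 < min (G.degree v₁) (G.degree v₂)) :
      G.Adj v₁ v₂ ∧ Complex.exp (Complex.I * (α v₁ v₂ : ℝ)) = 1 := by
    by_cases h : G.Adj v₁ v₂ ∧ ∃ n : ℤ, α v₁ v₂ = 2 * Real.pi * n
    · obtain ⟨hadj, n, hn⟩ := h
      exact ⟨hadj, hn ▸ cexp_I_mul_two_pi_int n⟩
    · rw [if_neg h] at hd
      omega
  have hmin : min (G.degree v₁) (G.degree v₂) ≤ 1 := by split_ifs at hd <;> omega
  rcases le_total (G.degree v₁) (G.degree v₂) with h | h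
  · exact .inl <| isFluxFreeLeaf_of_degree_le_one G (by omega) fun _ => hflux (by omega)
  · refine .inr <| isFluxFreeLeaf_of_degree_le_one G (by omega) fun _ => ?_
    obtain ⟨hadj, he⟩ := hflux (by omega)
    exact ⟨hadj.symm, by rw [← conj_cexp_I_mul_of_antisymm hα, he, map_one]⟩

theorem combForm_nonneg (α : V → V → ℝ) (φ : V → ℂ) : 0 ≤ combForm G α φ := by
  unfold combForm
  refine mul_nonneg (by norm_num) (Finset.sum_nonneg fun v _ => Finset.sum_nonneg fun u _ => ?_)
  split_ifs
  exacts [Complex.normSq_nonneg _, le_rfl]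

variable [DecidableEq V]

theorem combForm_update_le (hα : ∀ v u, α v u = - α u v) {a b : V}
    (hab : IsFluxFreeLeaf G α a b) (φ : V → ℂ) :
    combForm G α (Function.update φ a (φ b)) ≤ combForm G α φ := by
  unfold combForm
  gcongr with v _ u _
  split_ifs with h
  · by_cases hva : v = a
    · subst hva
      obtain ⟨rfl, he⟩ := hab u h
      rw [Function.update_self, Function.update_of_ne (G.ne_of_adj h).symm, he, one_mul, sub_self,
        map_zero]
      exact Complex.normSq_nonneg _
    by_cases hua : u = a
    · subst hua
      obtain ⟨rfl, he⟩ := hab v h.symm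
      rw [← conj_cexp_I_mul_of_antisymm hα, he, map_one, Function.update_self,
        Function.update_of_ne (G.ne_of_adj h), one_mul, sub_self, map_zero]
      exact Complex.normSq_nonneg _
    rw [Function.update_of_ne hva, Function.update_of_ne hua]
  · rfl

theorem combLap_mulVec_apply (α : V → V → ℝ) (φ : V → ℂ) (v : V) :
    (combLap G α *ᵥ φ) v
      = ∑ u, if G.Adj v u then φ v - Complex.exp (Complex.I * (α v u : ℝ)) * φ u else 0 := by
  simp only [combLap, magLap, mulVec, dotProduct, sub_mul, Finset.sum_sub_distrib, ite_mul,
    zero_mul, Finset.sum_ite_eq, Finset.mem_univ, if_true, div_one]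
  rw [Complex.ofReal_sum, Finset.sum_mul, ← Finset.sum_sub_distrib]
  refine Finset.sum_congr rfl fun u _ => ?_
  split_ifs <;> simp

/-- Each edge is counted from both ends, and the two half-edge terms add up to its term of `q`. -/
theorem star_dotProduct_combLap_mulVec (hα : ∀ v u, α v u = - α u v) (φ : V → ℂ) :
    star φ ⬝ᵥ (combLap G α *ᵥ φ) = combForm G α φ := by
  set e : V → V → ℂ := fun v u => Complex.exp (Complex.I * (α v u : ℝ)) with he
  let a : V → V → ℂ := fun v u => if G.Adj v u then conj (φ v) * (φ v - e v u * φ u) else 0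
  have hsum : star φ ⬝ᵥ (combLap G α *ᵥ φ) = ∑ v, ∑ u, a v u := by
    simp only [dotProduct, combLap_mulVec_apply, Finset.mul_sum, mul_ite, mul_zero, Pi.star_apply,
      Complex.star_def, a, he]
  have hedge (v u : V) : a v u + a u v
      = if G.Adj v u then (Complex.normSq (φ v - e v u * φ u) : ℂ) else 0 := by
    by_cases h : G.Adj v u
    · have hunit : conj (e v u) * e v u = 1 := by
        rw [RCLike.conj_mul]
        simp [he]
      simp only [a, if_pos h, if_pos h.symm, ← conj_cexp_I_mul_of_antisymm hα v u, he]
      exact Complex.conj_mul_sub_add_conj_mul_sub hunit _ _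
    · simp [a, h, G.adj_comm]
  calc star φ ⬝ᵥ (combLap G α *ᵥ φ)
      = (1 / 2) * (∑ v, ∑ u, a v u + ∑ v, ∑ u, a u v) := by
        rw [Finset.sum_comm (f := fun v u => a u v), hsum]
        ring
    _ = combForm G α φ := by
        simp only [← Finset.sum_add_distrib, hedge, combForm, he]
        push_cast [apply_ite ((↑) : ℝ → ℂ)]
        rfl

theorem combLap_posSemidef (hα : ∀ v u, α v u = - α u v) : (combLap G α).PosSemidef :=
  posSemidef_of_star_dotProduct_mulVec_nonneg fun φ => by
    rw [star_dotProduct_combLap_mulVec G hα]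
    exact_mod_cast combForm_nonneg G α φ

end Graph

section Lift

variable {V : Type} [DecidableEq V] {v₁ v₂ : V} (hv : v₁ ≠ v₂)

def liftLinearMap : ({v // v ≠ v₂} → ℂ) →ₗ[ℂ] (V → ℂ) :=
  LinearMap.funLeft ℂ ℂ fun v => if h : v = v₂ then ⟨v₁, hv⟩ else ⟨v, h⟩

theorem liftLinearMap_apply (ψ : {v // v ≠ v₂} → ℂ) : liftLinearMap hv ψ = liftFun hv ψ := by
  funext v
  by_cases h : v = v₂ <;> simp [liftLinearMap, liftFun, h]

theorem liftFun_apply_of_ne (ψ : {v // v ≠ v₂} → ℂ) {v : V} (h : v ≠ v₂) :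
    liftFun hv ψ v = ψ ⟨v, h⟩ :=
  dif_neg h

theorem liftFun_restrict (y : V → ℂ) :
    liftFun hv (LinearMap.funLeft ℂ ℂ Subtype.val y) = Function.update y v₂ (y v₁) := by
  funext v
  by_cases h : v = v₂
  · subst h
    simp [liftFun, LinearMap.funLeft_apply]
  · rw [liftFun_apply_of_ne hv _ h, Function.update_of_ne h, LinearMap.funLeft_apply]

variable [Fintype V]

theorem sum_norm_sq_le_sum_norm_sq_liftFun (ψ : {v // v ≠ v₂} → ℂ) :
    ∑ v', ‖ψ v'‖ ^ 2 ≤ ∑ v, ‖liftFun hv ψ v‖ ^ 2 := by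
  rw [← Fintype.sum_subtype_ne_add _ v₂]
  have hψ (v' : {v // v ≠ v₂}) : liftFun hv ψ v' = ψ v' := liftFun_apply_of_ne hv ψ v'.2
  simp only [hψ]
  exact le_add_of_nonneg_right (by positivity)

theorem sum_norm_sq_restrict {y : V → ℂ} (hy : y v₂ = 0) :
    ∑ v' : {v // v ≠ v₂}, ‖y v'‖ ^ 2 = ∑ v, ‖y v‖ ^ 2 := by
  rw [← Fintype.sum_subtype_ne_add _ v₂, hy, norm_zero, zero_pow two_ne_zero, add_zero]

end Lift

/-- `B` is the matrix of the paper's `Δ̃`, the operator with quadratic form `q ∘ L`. -/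
def IsContractedLap {V : Type} [Fintype V] [DecidableEq V] (G : SimpleGraph V)
    (α : V → V → ℝ) {v₁ v₂ : V} (hv : v₁ ≠ v₂) (B : Matrix {v // v ≠ v₂} {v // v ≠ v₂} ℂ) :
    Prop :=
  ∀ ψ, (B *ᵥ ψ) ⬝ᵥ star ψ = combForm G α (liftFun hv ψ)

namespace IsContractedLap

variable {V : Type} [Fintype V] [DecidableEq V] {G : SimpleGraph V} {α : V → V → ℝ}
  {v₁ v₂ : V} {hv : v₁ ≠ v₂} {B : Matrix {v // v ≠ v₂} {v // v ≠ v₂} ℂ}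

theorem posSemidef (hB : IsContractedLap G α hv B) : B.PosSemidef :=
  posSemidef_of_star_dotProduct_mulVec_nonneg fun ψ => by
    rw [dotProduct_comm, hB]
    exact_mod_cast combForm_nonneg G α _

theorem lamk_combLap_le_lamk (hB : IsContractedLap G α hv B)
    (hα : ∀ v u, α v u = - α u v) {k : ℕ}
    (hk : k + 1 < Fintype.card V) : lamk (combLap G α) k ≤ lamk B k := by
  have := lamk_le_lamk_add (d := 0) hB.posSemidef (combLap_posSemidef G hα).isHermitian
    (liftLinearMap hv) ⊤ (by simp)
    (fun ψ _ => by simpa [liftLinearMap_apply] using sum_norm_sq_le_sum_norm_sq_liftFun hv ψ)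
    (fun ψ _ => by
      rw [liftLinearMap_apply, star_dotProduct_combLap_mulVec G hα, dotProduct_comm, hB])
    (k := k) (by omega) (by simp; omega)
  simpa using this

theorem lamk_le_lamk_combLap_add (hB : IsContractedLap G α hv B)
    (hα : ∀ v u, α v u = - α u v)
    (T : (V → ℂ) →ₗ[ℂ] ({v // v ≠ v₂} → ℂ)) (K : Submodule ℂ (V → ℂ)) {d : ℕ}
    (hK : Fintype.card V ≤ finrank ℂ K + d)
    (hnorm : ∀ x ∈ K, ∑ v, ‖x v‖ ^ 2 ≤ ∑ v', ‖T x v'‖ ^ 2)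
    (hform : ∀ x ∈ K, combForm G α (liftFun hv (T x)) ≤ combForm G α x) {k : ℕ}
    (hk₁ : k + 1 < Fintype.card V) (hk : k + d < Fintype.card V) :
    lamk B k ≤ lamk (combLap G α) (k + d) :=
  lamk_le_lamk_add (combLap_posSemidef G hα) hB.posSemidef.isHermitian T K hK hnorm
    (fun x hx => by
      rw [dotProduct_comm, hB, star_dotProduct_combLap_mulVec G hα]
      exact_mod_cast hform x hx)
    (by simp; omega) hk

theorem lamk_le_lamk_combLap_add_two (hB : IsContractedLap G α hv B)
    (hα : ∀ v u, α v u = - α u v) {k : ℕ}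
    (hk : k + 2 < Fintype.card V) : lamk B k ≤ lamk (combLap G α) (k + 2) := by
  let P : (V → ℂ) →ₗ[ℂ] ℂ × ℂ := (LinearMap.proj v₁).prod (LinearMap.proj v₂)
  refine hB.lamk_le_lamk_combLap_add hα (LinearMap.funLeft ℂ ℂ Subtype.val) (LinearMap.ker P)
    ?_ (fun x hx => ?_) (fun x hx => ?_) (by omega) hk
  · simpa using P.finrank_le_finrank_ker_add
  all_goals obtain ⟨h₁, h₂⟩ : x v₁ = 0 ∧ x v₂ = 0 := by simpa [P] using hx
  · simpa only [LinearMap.funLeft_apply] using (sum_norm_sq_restrict h₂).ge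
  · rw [liftFun_restrict, Function.update_eq_self_iff.mpr (h₁.trans h₂.symm)]

theorem lamk_le_lamk_combLap_add_one_of_isFluxFreeLeaf₂ (hB : IsContractedLap G α hv B)
    (hα : ∀ v u, α v u = - α u v)
    (hleaf : IsFluxFreeLeaf G α v₂ v₁) {k : ℕ} (hk : k + 1 < Fintype.card V) :
    lamk B k ≤ lamk (combLap G α) (k + 1) := by
  refine hB.lamk_le_lamk_combLap_add hα (LinearMap.funLeft ℂ ℂ Subtype.val)
    (LinearMap.ker (LinearMap.proj v₂)) ?_ (fun x hx => ?_) (fun x hx => ?_) hk hk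
  · simpa using (LinearMap.proj (R := ℂ) (φ := fun _ : V => ℂ) v₂).finrank_le_finrank_ker_add
  · have hx₂ : x v₂ = 0 := by simpa using hx
    simpa only [LinearMap.funLeft_apply] using (sum_norm_sq_restrict hx₂).ge
  · rw [liftFun_restrict]
    exact combForm_update_le G hα hleaf x

/-- Precomposing with the transposition `(v₁ v₂)` turns the leaf `v₁` into the deleted vertex. -/
theorem lamk_le_lamk_combLap_add_one_of_isFluxFreeLeaf₁ (hB : IsContractedLap G α hv B)
    (hα : ∀ v u, α v u = - α u v)
    (hleaf : IsFluxFreeLeaf G α v₁ v₂) {k : ℕ} (hk : k + 1 < Fintype.card V) :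
    lamk B k ≤ lamk (combLap G α) (k + 1) := by
  let σ := Equiv.swap v₁ v₂
  refine hB.lamk_le_lamk_combLap_add hα
    (LinearMap.funLeft ℂ ℂ Subtype.val ∘ₗ LinearMap.funLeft ℂ ℂ σ)
    (LinearMap.ker (LinearMap.proj v₁)) ?_ (fun x hx => ?_) (fun x hx => ?_) hk hk
  · simpa using (LinearMap.proj (R := ℂ) (φ := fun _ : V => ℂ) v₁).finrank_le_finrank_ker_add
  · have hx₁ : x (σ v₂) = 0 := by simpa [σ] using hx
    simp only [LinearMap.comp_apply, LinearMap.funLeft_apply]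
    rw [sum_norm_sq_restrict (y := fun v => x (σ v)) hx₁]
    exact (Equiv.sum_comp σ fun v => ‖x v‖ ^ 2).ge
  · have hswap : Function.update (LinearMap.funLeft ℂ ℂ σ x) v₂ (LinearMap.funLeft ℂ ℂ σ x v₁)
        = Function.update x v₁ (x v₂) := by
      funext v
      by_cases h₁ : v = v₁
      · subst h₁
        simp [σ, hv]
      by_cases h₂ : v = v₂
      · subst h₂
        simp [σ, Ne.symm hv]
      simp [σ, h₁, h₂, Equiv.swap_apply_of_ne_of_ne]
    rw [LinearMap.comp_apply, liftFun_restrict, hswap]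
    exact combForm_update_le G hα hleaf x

theorem lamk_le_lamk_combLap_add_min_degree (hB : IsContractedLap G α hv B)
    (hα : ∀ v u, α v u = - α u v) {k : ℕ}
    (hk : k + (min (G.degree v₁) (G.degree v₂) + 1
      - (if G.Adj v₁ v₂ ∧ ∃ n : ℤ, α v₁ v₂ = 2 * Real.pi * n then 1 else 0)) < Fintype.card V) :
    lamk B k ≤ lamk (combLap G α) (k + (min (G.degree v₁) (G.degree v₂) + 1
      - (if G.Adj v₁ v₂ ∧ ∃ n : ℤ, α v₁ v₂ = 2 * Real.pi * n then 1 else 0))) := by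
  set d := min (G.degree v₁) (G.degree v₂) + 1
      - (if G.Adj v₁ v₂ ∧ ∃ n : ℤ, α v₁ v₂ = 2 * Real.pi * n then 1 else 0) with hd
  have hd₁ : 1 ≤ d := by
    split_ifs at hd with h
    · have := (G.degree_pos_iff_exists_adj v₁).mpr ⟨v₂, h.1⟩
      have := (G.degree_pos_iff_exists_adj v₂).mpr ⟨v₁, h.1.symm⟩
      omega
    · omega
  rcases Nat.lt_or_ge d 2 with hd₂ | hd₂
  · obtain hd_eq : d = 1 := by omega
    rw [hd_eq]
    rcases isFluxFreeLeaf_or_isFluxFreeLeaf G hα (hd ▸ hd_eq.le) with h | h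
    · exact hB.lamk_le_lamk_combLap_add_one_of_isFluxFreeLeaf₁ hα h (by omega)
    · exact hB.lamk_le_lamk_combLap_add_one_of_isFluxFreeLeaf₂ hα h (by omega)
  · calc lamk B k ≤ lamk (combLap G α) (k + 2) := hB.lamk_le_lamk_combLap_add_two hα (by omega)
      _ ≤ lamk (combLap G α) (k + d) :=
        (combLap_posSemidef G hα).isHermitian.lamk_le_lamk (by omega) hk

end IsContractedLap

theorem stmt14_general {V : Type} [Fintype V] [DecidableEq V]
    (G : SimpleGraph V) (α : V → V → ℝ) (hα : ∀ v u, α v u = - α u v)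
    (v₁ v₂ : V) (hv : v₁ ≠ v₂)
    (B : Matrix {v : V // v ≠ v₂} {v : V // v ≠ v₂} ℂ)
    (hB : ∀ ψ : {v : V // v ≠ v₂} → ℂ,
      (∑ v' : {v : V // v ≠ v₂}, B.mulVec ψ v' * star (ψ v'))
        = ((combForm G α (liftFun hv ψ) : ℝ) : ℂ)) :
    (∀ k : ℕ, 1 ≤ k → k ≤ Fintype.card V - 1 →
      lamk (combLap G α) (k - 1) ≤ lamk B (k - 1))
    ∧ (∀ k : ℕ, 1 ≤ k →
        k ≤ Fintype.card V
          - (min (G.degree v₁) (G.degree v₂) + 1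
              - (if G.Adj v₁ v₂ ∧ ∃ n : ℤ, α v₁ v₂ = 2 * Real.pi * n then 1 else 0)) →
        lamk B (k - 1)
          ≤ lamk (combLap G α)
              ((k - 1) + (min (G.degree v₁) (G.degree v₂) + 1
                - (if G.Adj v₁ v₂ ∧ ∃ n : ℤ, α v₁ v₂ = 2 * Real.pi * n then 1 else 0)))) :=
  ⟨fun k _ _ => IsContractedLap.lamk_combLap_le_lamk hB hα (by omega),
    fun k _ _ => IsContractedLap.lamk_le_lamk_combLap_add_min_degree hB hα (by omega)⟩

/-- contracting two vertices of a graph with combinatorial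
weights.  With `r = min(deg v₁, deg v₂)` and `s = 1` iff `v₁ ∼ v₂` with
`α v₁ v₂ ≡ 0 (mod 2π)`, the eigenvalues `μ_k` of the contracted Laplacian
`Δ̃` (the self-adjoint operator on `ℂ^{V ∖ {v₂}}` determined by the quadratic
form `q ∘ L`) satisfy `λ_k ≤ μ_k` and `μ_k ≤ λ_{k+r+1−s}`. -/
theorem stmt14 {V : Type} [Fintype V] [DecidableEq V] [Nonempty V]
    (hn : 2 ≤ Fintype.card V)
    (G : SimpleGraph V) (α : V → V → ℝ) (hα : ∀ v u, α v u = - α u v)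
    (v₁ v₂ : V) (hv : v₁ ≠ v₂)
    (B : Matrix {v : V // v ≠ v₂} {v : V // v ≠ v₂} ℂ)
    (hB_herm : B.IsHermitian)
    (hB : ∀ ψ : {v : V // v ≠ v₂} → ℂ,
      (∑ v' : {v : V // v ≠ v₂}, B.mulVec ψ v' * star (ψ v'))
        = ((combForm G α (liftFun hv ψ) : ℝ) : ℂ)) :
    (∀ k : ℕ, 1 ≤ k → k ≤ Fintype.card V - 1 →
      lamk (combLap G α) (k - 1) ≤ lamk B (k - 1))
    ∧ (∀ k : ℕ, 1 ≤ k →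
        k ≤ Fintype.card V
          - (min (G.degree v₁) (G.degree v₂) + 1
              - (if G.Adj v₁ v₂ ∧ ∃ n : ℤ, α v₁ v₂ = 2 * Real.pi * n then 1 else 0)) →
        lamk B (k - 1)
          ≤ lamk (combLap G α)
              ((k - 1) + (min (G.degree v₁) (G.degree v₂) + 1
                - (if G.Adj v₁ v₂ ∧ ∃ n : ℤ, α v₁ v₂ = 2 * Real.pi * n then 1 else 0)))) :=
  stmt14_general G α hα v₁ v₂ hv B hB
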